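/- arXiv:1611.02563 — 9 statements merged into one kernel-verified Lean document; each statement's English description precedes it below -/
import Mathlib

section
/- Let s, r, ℓ be positive integers and a, b real numbers. There exists a polynomial F in three complex variables (u, v, w) with complex coefficients such that for all u ∈ ℂ and all h ∈ ℝ, F(u, e^{ih}, e^{−ih}) = ∏_{j=1}^{s} (u − Z_j(h)); moreover F can be chosen monic of degree s in the variable u, with degree at most r·ℓ in v and degree at most r·ℓ in w. -/
open Complex Real

/-- The lemniscate braid strand parametrization:
`Z s r ℓ a b j h = a·cos((r·h + 2π(j−1))/s) + i·(b/ℓ)·sin(ℓ·(r·h + 2π(j−1))/s)`. -/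
noncomputable def lemniscateZ (s r ℓ : ℕ) (a b : ℝ) (j : ℕ) (h : ℝ) : ℂ :=
  (a * Real.cos ((r * h + 2 * Real.pi * ((j : ℝ) - 1)) / s) : ℝ) +
    Complex.I * ((b / ℓ) * Real.sin (ℓ * (r * h + 2 * Real.pi * ((j : ℝ) - 1)) / s) : ℝ)

/-!
Put `ζ = e^{2πi/s}`, `ω = e^{irh/s}` and `L(w) = a(w + w⁻¹)/2 + b(w^ℓ - w^{-ℓ})/(2ℓ)`; then
`Z_{j+1}(h) = L(ζ^j ω)`. Clearing the denominators `w^ℓ`, the product `∏_j (u - L(ζ^j x))` becomes a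
polynomial in `u` whose coefficients are polynomials in `x` invariant under `x ↦ ζ x`, hence
polynomials in `x^s`, of degree at most `2ℓ` in `x^s`. At `x = ω` we have `x^s = e^{irh} = v^r`
with `v = e^{ih}`, so after undoing the shift by `x^{sℓ} = v^{rℓ}` each coefficient is a Laurent
polynomial in `v^r` with exponents in `[-ℓ, ℓ]`, i.e. a polynomial in `v` and `w = v⁻¹` of degree
at most `rℓ` in each.
-/

open Polynomial Finset

noncomputable section

theorem Finset.prod_range_succ_eq_of_eq {M : Type*} [CommMonoid M] {g : ℕ → M} {s : ℕ}
    (h : g s = g 0) : ∏ j ∈ range s, g (j + 1) = ∏ j ∈ range s, g j := by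
  cases s with
  | zero => simp
  | succ t => rw [prod_range_succ, h, ← prod_range_succ']

namespace Polynomial

section MapCoeffs

variable {R S : Type*} [Semiring R] [Semiring S]

def mapCoeffs (f : R → S) (p : R[X]) : S[X] :=
  ∑ n ∈ range (p.natDegree + 1), monomial n (f (p.coeff n))

theorem coeff_mapCoeffs {f : R → S} (hf : f 0 = 0) (p : R[X]) (n : ℕ) :
    (p.mapCoeffs f).coeff n = f (p.coeff n) := by
  simp only [mapCoeffs, finsetSum_coeff, coeff_monomial, sum_ite_eq', mem_range]
  split_ifs with h
  · rfl
  · rw [coeff_eq_zero_of_natDegree_lt (by omega), hf]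

theorem natDegree_mapCoeffs_le (f : R → S) (p : R[X]) :
    (p.mapCoeffs f).natDegree ≤ p.natDegree :=
  natDegree_sum_le_of_forall_le _ _ fun _ hn =>
    (natDegree_monomial_le _).trans (Nat.lt_succ_iff.1 (mem_range.1 hn))

end MapCoeffs

theorem natDegree_contract_le {R : Type*} [CommSemiring R] {p n : ℕ} (hp : p ≠ 0) {f : R[X]}
    (hf : f.natDegree ≤ p * n) : (contract p f).natDegree ≤ n :=
  natDegree_le_iff_coeff_eq_zero.2 fun m hm => by
    rw [coeff_contract hp]
    exact coeff_eq_zero_of_natDegree_lt (hf.trans_lt (by rw [mul_comm]; gcongr))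

theorem expand_contract_of_comp_C_mul_X_eq_self {R : Type*} [CommRing R] [NoZeroDivisors R]
    {s : ℕ} (hs : s ≠ 0) {ζ : R} (hζ : IsPrimitiveRoot ζ s) {p : R[X]}
    (hp : p.comp (C ζ * X) = p) : expand R s (contract s p) = p := by
  ext n
  rw [coeff_expand (Nat.pos_of_ne_zero hs), coeff_contract hs]
  split_ifs with h
  · rw [Nat.div_mul_cancel h]
  · have hn : p.coeff n * (ζ ^ n - 1) = 0 := by
      rw [mul_sub, mul_one, ← comp_C_mul_X_coeff, hp, sub_self]
    exact ((mul_eq_zero.1 hn).resolve_right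
      (sub_ne_zero.2 (mt (hζ.pow_eq_one_iff_dvd n).1 h))).symm

theorem natDegree_coeff_prod_le {R ι : Type*} [CommSemiring R] (t : Finset ι) (f : ι → R[X][X])
    {d : ℕ} (hf : ∀ i ∈ t, ∀ k, ((f i).coeff k).natDegree ≤ d) (k : ℕ) :
    ((∏ i ∈ t, f i).coeff k).natDegree ≤ #t * d := by
  induction t using Finset.cons_induction generalizing k with
  | empty => rw [prod_empty, coeff_one]; split_ifs <;> simp
  | cons i t hi ih =>
    rw [prod_cons, coeff_mul, card_cons, add_one_mul, add_comm]
    refine natDegree_sum_le_of_forall_le _ _ fun x _ => natDegree_mul_le.trans (add_le_add ?_ ?_)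
    · exact hf i (mem_cons_self i t) x.1
    · exact ih (fun j hj => hf j (mem_cons_of_mem hj)) x.2

section CyclicProduct

variable {R : Type*} [CommRing R]

/-- `∏_{j < s} f(u, ζ^j x)` for `f ∈ R[x][u]`. -/
def cyclicProduct (s : ℕ) (ζ : R) (f : R[X][X]) : R[X][X] :=
  ∏ j ∈ range s, f.map (compRingHom (C (ζ ^ j) * X))

theorem compRingHom_C_mul_X_comp (c d : R) :
    (compRingHom (C c * X)).comp (compRingHom (C d * X)) = compRingHom (C (d * c) * X) :=
  RingHom.ext fun p => by simp [comp_assoc, mul_assoc]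

theorem map_cyclicProduct {s : ℕ} {ζ : R} (hζ : ζ ^ s = 1) (f : R[X][X]) :
    (cyclicProduct s ζ f).map (compRingHom (C ζ * X)) = cyclicProduct s ζ f := by
  simp only [cyclicProduct, Polynomial.map_prod, Polynomial.map_map, compRingHom_C_mul_X_comp,
    ← pow_succ]
  exact prod_range_succ_eq_of_eq (g := fun j => f.map (compRingHom (C (ζ ^ j) * X)))
    (by rw [hζ, pow_zero])

theorem natDegree_cyclicProduct_le (s : ℕ) (ζ : R) (f : R[X][X]) :
    (cyclicProduct s ζ f).natDegree ≤ s * f.natDegree := by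
  refine (natDegree_prod_le _ _).trans
    ((sum_le_card_nsmul _ _ _ fun j _ => natDegree_map_le).trans_eq ?_)
  rw [card_range, smul_eq_mul]

theorem coeff_cyclicProduct_self {s : ℕ} {ζ : R} {f : R[X][X]} (hf : f.natDegree ≤ 1) :
    (cyclicProduct s ζ f).coeff s = ∏ j ∈ range s, (f.coeff 1).comp (C (ζ ^ j) * X) := by
  have h := coeff_prod_of_natDegree_le (s := range s)
    (fun j => f.map (compRingHom (C (ζ ^ j) * X))) 1 (fun j _ => natDegree_map_le.trans hf)
  rw [card_range, mul_one] at h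
  simp only [cyclicProduct, h, coeff_map, coe_compRingHom_apply]

theorem natDegree_coeff_cyclicProduct_le (s : ℕ) (ζ : R) {f : R[X][X]} {d : ℕ}
    (hf : ∀ k, (f.coeff k).natDegree ≤ d) (k : ℕ) :
    ((cyclicProduct s ζ f).coeff k).natDegree ≤ s * d := by
  have hmap (j k : ℕ) : ((f.map (compRingHom (C (ζ ^ j) * X))).coeff k).natDegree ≤ d :=
    calc _ = ((f.coeff k).comp (C (ζ ^ j) * X)).natDegree := by
          rw [coeff_map, coe_compRingHom_apply]
      _ ≤ (f.coeff k).natDegree * (C (ζ ^ j) * X).natDegree := natDegree_comp_le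
      _ ≤ d * 1 := Nat.mul_le_mul (hf k) ((natDegree_C_mul_le _ X).trans natDegree_X_le)
      _ = d := mul_one d
  have := natDegree_coeff_prod_le (range s) _ (fun j _ => hmap j) k
  rwa [card_range] at this

end CyclicProduct

end Polynomial

section LaurentCollapse

variable {K : Type*} [Field K]

/-- Reads `d` as the Laurent polynomial `∑ dₘ z^{r(m-ℓ)}`, written in `z = X 0` and
`z⁻¹ = X 1`: of the truncated differences `m - ℓ` and `ℓ - m` at most one is nonzero. -/
def laurentCollapse (r ℓ : ℕ) (d : K[X]) : MvPolynomial (Fin 2) K :=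
  d.sum fun m c =>
    MvPolynomial.C c * MvPolynomial.X 0 ^ (r * (m - ℓ)) * MvPolynomial.X 1 ^ (r * (ℓ - m))

theorem laurentCollapse_C_mul_X_pow (r ℓ : ℕ) (c : K) :
    laurentCollapse r ℓ (C c * X ^ ℓ) = MvPolynomial.C c := by
  rw [laurentCollapse, C_mul_X_pow_eq_monomial, sum_monomial_index] <;> simp

theorem totalDegree_laurentCollapse_le {r ℓ : ℕ} {d : K[X]} (hd : d.natDegree ≤ 2 * ℓ) :
    (laurentCollapse r ℓ d).totalDegree ≤ r * ℓ := by
  refine MvPolynomial.totalDegree_finsetSum_le fun m hm => ?_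
  have hm : m ≤ 2 * ℓ := (le_natDegree_of_mem_supp m hm).trans hd
  calc _ ≤ 0 + r * (m - ℓ) + r * (ℓ - m) := by
        refine (MvPolynomial.totalDegree_mul _ _).trans
          (add_le_add ?_ (MvPolynomial.totalDegree_X_pow _ _).le)
        refine (MvPolynomial.totalDegree_mul _ _).trans
          (add_le_add ?_ (MvPolynomial.totalDegree_X_pow _ _).le)
        exact (MvPolynomial.totalDegree_C _).le
    _ ≤ r * ℓ := by
        rw [zero_add, ← mul_add]
        exact Nat.mul_le_mul_left r (by omega)

theorem eval_laurentCollapse_mul (r ℓ : ℕ) (d : K[X]) {z : K} (hz : z ≠ 0) :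
    MvPolynomial.eval ![z, z⁻¹] (laurentCollapse r ℓ d) * z ^ (r * ℓ) = d.eval (z ^ r) := by
  rw [laurentCollapse, Polynomial.sum, map_sum, sum_mul, eval_eq_sum, Polynomial.sum]
  refine sum_congr rfl fun m _ => ?_
  simp only [map_mul, map_pow, MvPolynomial.eval_C, MvPolynomial.eval_X, Matrix.cons_val_zero,
    Matrix.cons_val_one]
  rcases le_total m ℓ with h | h
  · obtain ⟨k, rfl⟩ := Nat.exists_eq_add_of_le h
    simp [inv_pow, ← pow_mul]
    field_simp
    ring
  · obtain ⟨k, rfl⟩ := Nat.exists_eq_add_of_le h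
    simp [pow_add, ← pow_mul]
    ring

end LaurentCollapse

section Lemniscate

def lemniscateLaurent (ℓ : ℕ) (a b w : ℂ) : ℂ :=
  a / 2 * (w + w⁻¹) + b / (2 * ℓ) * (w ^ ℓ - (w ^ ℓ)⁻¹)

def lemniscatePoly (ℓ : ℕ) (a b : ℂ) : ℂ[X] :=
  C (a / 2) * (X ^ (ℓ + 1) + X ^ (ℓ - 1)) + C (b / (2 * ℓ)) * (X ^ (2 * ℓ) - 1)

theorem lemniscateLaurent_exp (ℓ : ℕ) (a b θ : ℝ) :
    lemniscateLaurent ℓ a b (Complex.exp (θ * I)) =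
      ((a * Real.cos θ : ℝ) : ℂ) + I * ((b / ℓ * Real.sin (ℓ * θ) : ℝ) : ℂ) := by
  rw [lemniscateLaurent, ← Complex.exp_nat_mul, ← Complex.exp_neg, ← Complex.exp_neg]
  push_cast
  rw [Complex.cos, Complex.sin]
  ring_nf
  simp only [I_sq]
  ring_nf

theorem lemniscateZ_succ (s r ℓ : ℕ) (a b : ℝ) (j : ℕ) (h : ℝ) :
    lemniscateZ s r ℓ a b (j + 1) h =
      lemniscateLaurent ℓ a b (Complex.exp (((r * h + 2 * π * j) / s : ℝ) * I)) := by
  rw [lemniscateLaurent_exp, lemniscateZ, mul_div_assoc]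
  push_cast
  ring_nf

variable {ℓ : ℕ} (a b : ℂ)

theorem natDegree_lemniscatePoly_le (hℓ : 0 < ℓ) :
    (lemniscatePoly ℓ a b).natDegree ≤ 2 * ℓ := by
  unfold lemniscatePoly
  compute_degree
  omega

theorem eval_lemniscatePoly (hℓ : 0 < ℓ) {w : ℂ} (hw : w ≠ 0) :
    (lemniscatePoly ℓ a b).eval w = w ^ ℓ * lemniscateLaurent ℓ a b w := by
  obtain ⟨m, rfl⟩ := Nat.exists_eq_add_of_lt hℓ
  simp only [lemniscatePoly, lemniscateLaurent, eval_add, eval_mul, eval_C, eval_pow, eval_X,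
    eval_sub, eval_one, Nat.add_sub_cancel]
  field_simp
  ring

end Lemniscate

section Braid

/-- `x^ℓ (u - L(x))`, with `L = lemniscateLaurent ℓ a b`. -/
def strandFactor (ℓ : ℕ) (a b : ℂ) : ℂ[X][X] := C (X ^ ℓ) * X - C (lemniscatePoly ℓ a b)

def braidProduct (s ℓ : ℕ) (a b ζ : ℂ) : ℂ[X][X] := cyclicProduct s ζ (strandFactor ℓ a b)

variable {s ℓ : ℕ} {a b ζ : ℂ}

theorem natDegree_strandFactor_le : (strandFactor ℓ a b).natDegree ≤ 1 := by
  rw [strandFactor, sub_eq_add_neg, ← C_neg]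
  exact natDegree_linear_le

theorem natDegree_braidProduct_le : (braidProduct s ℓ a b ζ).natDegree ≤ s :=
  (natDegree_cyclicProduct_le s ζ _).trans
    ((Nat.mul_le_mul_left s natDegree_strandFactor_le).trans_eq (mul_one s))

theorem coeff_braidProduct_self :
    (braidProduct s ℓ a b ζ).coeff s = C ((∏ j ∈ range s, ζ ^ j) ^ ℓ) * X ^ (s * ℓ) := by
  have hcoeff : (strandFactor ℓ a b).coeff 1 = X ^ ℓ := by
    rw [strandFactor, coeff_sub, coeff_C_mul_X, coeff_C, if_pos rfl, if_neg one_ne_zero, sub_zero]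
  simp only [braidProduct, coeff_cyclicProduct_self natDegree_strandFactor_le, hcoeff, pow_comp,
    X_comp, prod_pow, prod_mul_distrib, prod_const, card_range, map_prod, C_pow, mul_pow, pow_mul]

theorem natDegree_coeff_braidProduct_le (hℓ : 0 < ℓ) (k : ℕ) :
    ((braidProduct s ℓ a b ζ).coeff k).natDegree ≤ s * (2 * ℓ) := by
  refine natDegree_coeff_cyclicProduct_le s ζ (fun k => ?_) k
  rw [strandFactor]
  rcases k with _ | _ | k <;> simp only [coeff_sub, coeff_C_mul_X, coeff_C] <;> simp
  · exact natDegree_lemniscatePoly_le a b hℓ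
  · omega

theorem eval_map_braidProduct (u ω : ℂ) :
    ((braidProduct s ℓ a b ζ).map (evalRingHom ω)).eval u =
      ∏ j ∈ range s, ((ζ ^ j * ω) ^ ℓ * u - (lemniscatePoly ℓ a b).eval (ζ ^ j * ω)) := by
  simp [braidProduct, cyclicProduct, strandFactor, Polynomial.map_prod, eval_prod]

def braidPolynomial (s r ℓ : ℕ) (a b ζ : ℂ) : (MvPolynomial (Fin 2) ℂ)[X] :=
  (braidProduct s ℓ a b ζ).mapCoeffs fun c =>
    MvPolynomial.C ((∏ j ∈ range s, ζ ^ j) ^ ℓ)⁻¹ * laurentCollapse r ℓ (contract s c)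

variable {r : ℕ}

theorem coeff_braidPolynomial (k : ℕ) :
    (braidPolynomial s r ℓ a b ζ).coeff k = MvPolynomial.C ((∏ j ∈ range s, ζ ^ j) ^ ℓ)⁻¹ *
      laurentCollapse r ℓ (contract s ((braidProduct s ℓ a b ζ).coeff k)) :=
  coeff_mapCoeffs (by simp [contract, laurentCollapse]) _ k

theorem natDegree_braidPolynomial_le : (braidPolynomial s r ℓ a b ζ).natDegree ≤ s :=
  (natDegree_mapCoeffs_le _ _).trans natDegree_braidProduct_le

theorem coeff_braidPolynomial_self (hs : s ≠ 0) (hζ : ζ ≠ 0) :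
    (braidPolynomial s r ℓ a b ζ).coeff s = 1 := by
  have hκ : (∏ j ∈ range s, ζ ^ j) ^ ℓ ≠ 0 :=
    pow_ne_zero _ (prod_ne_zero_iff.2 fun j _ => pow_ne_zero j hζ)
  have hcontract : contract s (C ((∏ j ∈ range s, ζ ^ j) ^ ℓ) * X ^ (s * ℓ)) =
      C ((∏ j ∈ range s, ζ ^ j) ^ ℓ) * X ^ ℓ := by
    rw [← contract_expand (f := C ((∏ j ∈ range s, ζ ^ j) ^ ℓ) * X ^ ℓ) (p := s) hs]
    simp [pow_mul]
  rw [coeff_braidPolynomial, coeff_braidProduct_self, hcontract, laurentCollapse_C_mul_X_pow,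
    ← map_mul, inv_mul_cancel₀ hκ, map_one]

theorem monic_braidPolynomial (hs : s ≠ 0) (hζ : ζ ≠ 0) :
    (braidPolynomial s r ℓ a b ζ).Monic :=
  monic_of_natDegree_le_of_coeff_eq_one s natDegree_braidPolynomial_le
    (coeff_braidPolynomial_self hs hζ)

theorem natDegree_braidPolynomial (hs : s ≠ 0) (hζ : ζ ≠ 0) :
    (braidPolynomial s r ℓ a b ζ).natDegree = s :=
  natDegree_eq_of_le_of_coeff_ne_zero natDegree_braidPolynomial_le
    (by rw [coeff_braidPolynomial_self hs hζ]; exact one_ne_zero)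

theorem totalDegree_coeff_braidPolynomial_le (hs : s ≠ 0) (hℓ : 0 < ℓ) (k : ℕ) :
    ((braidPolynomial s r ℓ a b ζ).coeff k).totalDegree ≤ r * ℓ := by
  rw [coeff_braidPolynomial]
  refine (MvPolynomial.totalDegree_mul _ _).trans ?_
  rw [MvPolynomial.totalDegree_C, zero_add]
  exact totalDegree_laurentCollapse_le
    (natDegree_contract_le hs (natDegree_coeff_braidProduct_le hℓ k))

theorem eval_map_braidPolynomial (hs : s ≠ 0) (hℓ : 0 < ℓ) (hζ : IsPrimitiveRoot ζ s)
    {v ω : ℂ} (hv : v ≠ 0) (hω : ω ^ s = v ^ r) (u : ℂ) :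
    ((braidPolynomial s r ℓ a b ζ).map (MvPolynomial.eval ![v, v⁻¹])).eval u =
      ∏ j ∈ range s, (u - lemniscateLaurent ℓ a b (ζ ^ j * ω)) := by
  have hω0 : ω ≠ 0 := by
    rintro rfl
    exact pow_ne_zero r hv (hω ▸ zero_pow hs)
  set κ := (∏ j ∈ range s, ζ ^ j) ^ ℓ
  have hκ : κ ≠ 0 := pow_ne_zero _ (prod_ne_zero_iff.2 fun j _ => pow_ne_zero j (hζ.ne_zero hs))
  have hinv (k : ℕ) : ((braidProduct s ℓ a b ζ).coeff k).comp (C ζ * X) =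
      (braidProduct s ℓ a b ζ).coeff k := by
    unfold braidProduct
    simpa [coeff_map] using
      congrArg (coeff · k) (map_cyclicProduct hζ.pow_eq_one (strandFactor ℓ a b))
  have hcoeffs : (braidPolynomial s r ℓ a b ζ).map (MvPolynomial.eval ![v, v⁻¹]) *
      C (v ^ (r * ℓ)) = C κ⁻¹ * (braidProduct s ℓ a b ζ).map (evalRingHom ω) := by
    ext k
    rw [coeff_mul_C, coeff_C_mul, coeff_map, coeff_map, coeff_braidPolynomial, map_mul,
      MvPolynomial.eval_C, mul_assoc, eval_laurentCollapse_mul _ _ _ hv, ← hω, ← expand_eval,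
      expand_contract_of_comp_C_mul_X_eq_self hs hζ (hinv k), coe_evalRingHom]
  have hfactor (j : ℕ) : (ζ ^ j * ω) ^ ℓ * u - (lemniscatePoly ℓ a b).eval (ζ ^ j * ω) =
      (ζ ^ j * ω) ^ ℓ * (u - lemniscateLaurent ℓ a b (ζ ^ j * ω)) := by
    rw [eval_lemniscatePoly a b hℓ (mul_ne_zero (pow_ne_zero j (hζ.ne_zero hs)) hω0)]
    ring
  have hprod : ∏ j ∈ range s, (ζ ^ j * ω) ^ ℓ = κ * v ^ (r * ℓ) := by
    rw [prod_pow, prod_mul_distrib, prod_const, card_range, hω, mul_pow, ← pow_mul]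
  apply mul_right_cancel₀ (pow_ne_zero (r * ℓ) hv)
  calc _ = ((braidPolynomial s r ℓ a b ζ).map (MvPolynomial.eval ![v, v⁻¹]) *
        C (v ^ (r * ℓ))).eval u := by rw [eval_mul, eval_C]
    _ = κ⁻¹ * ∏ j ∈ range s,
          ((ζ ^ j * ω) ^ ℓ * u - (lemniscatePoly ℓ a b).eval (ζ ^ j * ω)) := by
      rw [hcoeffs, eval_mul, eval_C, eval_map_braidProduct]
    _ = κ⁻¹ * (∏ j ∈ range s, (ζ ^ j * ω) ^ ℓ) *
          ∏ j ∈ range s, (u - lemniscateLaurent ℓ a b (ζ ^ j * ω)) := by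
      rw [mul_assoc, ← prod_mul_distrib]
      simp_rw [hfactor]
    _ = _ := by rw [hprod, ← mul_assoc, inv_mul_cancel₀ hκ, one_mul, mul_comm]

end Braid

end

theorem lemniscate_braid_polynomial_general (s r ℓ : ℕ) (hs : 0 < s) (hℓ : 0 < ℓ)
    (a b : ℝ) :
    ∃ F : Polynomial (MvPolynomial (Fin 2) ℂ),
      F.Monic ∧ F.natDegree = s ∧
      (∀ k : ℕ, MvPolynomial.degreeOf 0 (F.coeff k) ≤ r * ℓ ∧
        MvPolynomial.degreeOf 1 (F.coeff k) ≤ r * ℓ) ∧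
      (∀ (u : ℂ) (h : ℝ),
        Polynomial.eval u
          (F.map (MvPolynomial.eval
            ![Complex.exp (Complex.I * h), Complex.exp (-(Complex.I * h))])) =
        ∏ j ∈ Finset.Icc 1 s, (u - lemniscateZ s r ℓ a b j h)) := by
  set ζ := Complex.exp (2 * π * I / s)
  have hζ : IsPrimitiveRoot ζ s := Complex.isPrimitiveRoot_exp s hs.ne'
  have hdeg (k : ℕ) (i : Fin 2) :
      MvPolynomial.degreeOf i ((braidPolynomial s r ℓ a b ζ).coeff k) ≤ r * ℓ :=
    (MvPolynomial.degreeOf_le_totalDegree _ i).trans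
      (totalDegree_coeff_braidPolynomial_le hs.ne' hℓ k)
  refine ⟨braidPolynomial s r ℓ a b ζ, monic_braidPolynomial hs.ne' (hζ.ne_zero hs.ne'),
    natDegree_braidPolynomial hs.ne' (hζ.ne_zero hs.ne'), fun k => ⟨hdeg k 0, hdeg k 1⟩,
    fun u h => ?_⟩
  have hsC : (s : ℂ) ≠ 0 := Nat.cast_ne_zero.2 hs.ne'
  have hω : Complex.exp ((r * h / s : ℝ) * I) ^ s = Complex.exp (I * h) ^ r := by
    rw [← Complex.exp_nat_mul, ← Complex.exp_nat_mul]
    congr 1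
    push_cast
    field_simp
  rw [Complex.exp_neg, eval_map_braidPolynomial hs.ne' hℓ hζ (Complex.exp_ne_zero _) hω,
    ← Ico_add_one_right_eq_Icc, prod_Ico_eq_prod_range, Nat.add_sub_cancel]
  refine prod_congr rfl fun j _ => ?_
  rw [add_comm 1 j, lemniscateZ_succ, ← Complex.exp_nat_mul, ← Complex.exp_add]
  congr 3
  push_cast
  field_simp
  ring

/-- There is a polynomial `F(u, v, w)`, monic of degree `s` in `u` and of degree at most
`r·ℓ` in each of `v` and `w`, such that `F(u, e^{ih}, e^{−ih}) = ∏_{j=1}^{s} (u − Z_j(h))`. -/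
theorem lemniscate_braid_polynomial (s r ℓ : ℕ) (hs : 0 < s) (hr : 0 < r) (hℓ : 0 < ℓ)
    (a b : ℝ) :
    ∃ F : Polynomial (MvPolynomial (Fin 2) ℂ),
      F.Monic ∧ F.natDegree = s ∧
      (∀ k : ℕ, MvPolynomial.degreeOf 0 (F.coeff k) ≤ r * ℓ ∧
        MvPolynomial.degreeOf 1 (F.coeff k) ≤ r * ℓ) ∧
      (∀ (u : ℂ) (h : ℝ),
        Polynomial.eval u
          (F.map (MvPolynomial.eval
            ![Complex.exp (Complex.I * h), Complex.exp (-(Complex.I * h))])) =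
        ∏ j ∈ Finset.Icc 1 s, (u - lemniscateZ s r ℓ a b j h)) :=
  lemniscate_braid_polynomial_general s r ℓ hs hℓ a b
end

section
/- Let p, q be coprime positive integers and let R, ρ be positive real numbers satisfying R^p = ρ^q and R² + ρ² = 1. Then the set {(u, v) ∈ ℂ² : |u|² + |v|² = 1 and u^p − v^q = 0} equals the set {(R·e^{iqt}, ρ·e^{ipt}) : t ∈ ℝ}, i.e. the zero set of Brauner's map on the unit 3-sphere is exactly the image of the (p,q) torus-knot curve. -/
/-!
On the sphere the moduli of a zero are forced: if `x ^ p = y ^ q` with `x, y ≥ 0`, then `x` and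
`y` increase together, so `x ^ 2 + y ^ 2` is strictly monotone along that curve and
`(‖u‖, ‖v‖) = (R, ρ)`. The phases `a = u / R`, `b = v / ρ` then lie in the circle group with
`a ^ p = b ^ q`, and for a Bézout relation `m p + n q = 1` the element `s = b ^ m * a ^ n`
satisfies `s ^ q = a`, `s ^ p = b`; writing `s = e^{it}` gives the parameter `t`.
-/

open Complex

theorem exists_pow_eq_and_pow_eq_of_pow_eq_pow {G : Type*} [CommGroup G] {p q : ℕ}
    (hpq : p.Coprime q) {a b : G} (h : a ^ p = b ^ q) : ∃ s : G, s ^ q = a ∧ s ^ p = b := by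
  obtain ⟨x, y, hxy⟩ := Nat.isCoprime_iff_coprime.mpr hpq
  have h' : a ^ (p : ℤ) = b ^ (q : ℤ) := by simpa only [zpow_natCast] using h
  refine ⟨b ^ x * a ^ y, ?_, ?_⟩
  · rw [← zpow_natCast]
    calc (b ^ x * a ^ y) ^ (q : ℤ) = (b ^ (q : ℤ)) ^ x * a ^ (y * q) := by
          rw [mul_zpow, ← zpow_mul, ← zpow_mul, mul_comm x, zpow_mul b]
      _ = a ^ (x * p + y * q) := by rw [← h', ← zpow_mul, zpow_add, mul_comm (p : ℤ)]
      _ = a := by rw [hxy, zpow_one]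
  · rw [← zpow_natCast]
    calc (b ^ x * a ^ y) ^ (p : ℤ) = b ^ (x * p) * (a ^ (p : ℤ)) ^ y := by
          rw [mul_zpow, ← zpow_mul, ← zpow_mul, mul_comm y, zpow_mul a]
      _ = b ^ (x * p + y * q) := by rw [h', ← zpow_mul, zpow_add, mul_comm (q : ℤ)]
      _ = b := by rw [hxy, zpow_one]

theorem sq_add_sq_lt_of_lt_of_pow_eq_pow {p q : ℕ} (hp : p ≠ 0) {x y R ρ : ℝ}
    (hx : 0 ≤ x) (hy : 0 ≤ y) (hρ : 0 ≤ ρ) (hxy : x ^ p = y ^ q) (hRρ : R ^ p = ρ ^ q)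
    (hxR : x < R) : x ^ 2 + y ^ 2 < R ^ 2 + ρ ^ 2 := by
  have hyρ : y < ρ := lt_of_pow_lt_pow_left₀ q hρ <| by
    rw [← hxy, ← hRρ]; exact pow_lt_pow_left₀ hxR hx hp
  gcongr

theorem eq_and_eq_of_pow_eq_pow_of_sq_add_sq_eq {p q : ℕ} (hp : p ≠ 0) (hq : q ≠ 0)
    {x y R ρ : ℝ} (hx : 0 ≤ x) (hy : 0 ≤ y) (hR : 0 ≤ R) (hρ : 0 ≤ ρ)
    (hxy : x ^ p = y ^ q) (hRρ : R ^ p = ρ ^ q) (h : x ^ 2 + y ^ 2 = R ^ 2 + ρ ^ 2) :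
    x = R ∧ y = ρ := by
  have hxR : x = R := by
    by_contra hne
    rcases Ne.lt_or_gt hne with hlt | hgt
    · exact (sq_add_sq_lt_of_lt_of_pow_eq_pow hp hx hy hρ hxy hRρ hlt).ne h
    · exact (sq_add_sq_lt_of_lt_of_pow_eq_pow hp hR hρ hy hRρ hxy hgt).ne' h
  refine ⟨hxR, (pow_left_inj₀ hy hρ hq).mp ?_⟩
  rw [← hxy, ← hRρ, hxR]

theorem Circle.exists_exp_mul_of_pow_eq_pow {p q : ℕ} (hpq : p.Coprime q) {a b : Circle}
    (h : a ^ p = b ^ q) : ∃ t : ℝ, Circle.exp (q * t) = a ∧ Circle.exp (p * t) = b := by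
  obtain ⟨s, hsa, hsb⟩ := exists_pow_eq_and_pow_eq_of_pow_eq_pow hpq h
  obtain ⟨t, rfl⟩ := Circle.exp_surjective s
  exact ⟨t, by rwa [Circle.exp_natCast_mul], by rwa [Circle.exp_natCast_mul]⟩

theorem exists_eq_norm_mul_exp_of_pow_eq_pow {p q : ℕ} (hpq : p.Coprime q) {u v : ℂ}
    (hu : u ≠ 0) (hv : v ≠ 0) (h : u ^ p = v ^ q) :
    ∃ t : ℝ, u = ‖u‖ * exp (I * (q * t)) ∧ v = ‖v‖ * exp (I * (p * t)) := by
  let a : Circle := ⟨u / ‖u‖, mem_sphere_zero_iff_norm.2 (by simp [hu])⟩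
  let b : Circle := ⟨v / ‖v‖, mem_sphere_zero_iff_norm.2 (by simp [hv])⟩
  have hab : a ^ p = b ^ q := by
    ext
    rw [Circle.coe_pow, Circle.coe_pow]
    simp only [div_pow, a, b]
    rw [← ofReal_pow, ← ofReal_pow, ← norm_pow, ← norm_pow, h]
  obtain ⟨t, hta, htb⟩ := Circle.exists_exp_mul_of_pow_eq_pow hpq hab
  have hexp : ∀ n : ℕ, (Circle.exp (n * t) : ℂ) = exp (I * (n * t)) := fun n => by
    rw [Circle.coe_exp, mul_comm]; push_cast; rfl
  refine ⟨t, ?_, ?_⟩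
  · rw [← hexp, hta]
    exact (mul_div_cancel₀ _ (ofReal_ne_zero.2 (norm_ne_zero_iff.2 hu))).symm
  · rw [← hexp, htb]
    exact (mul_div_cancel₀ _ (ofReal_ne_zero.2 (norm_ne_zero_iff.2 hv))).symm

/-- The zero set of Brauner's map `f(u,v) = u^p − v^q` on the unit 3-sphere is exactly the
`(p,q)` torus knot curve `t ↦ (R·e^{iqt}, ρ·e^{ipt})`, where `R^p = ρ^q` and `R² + ρ² = 1`. -/
theorem brauner_zero_set_is_torus_knot (p q : ℕ) (hp : 0 < p) (hq : 0 < q)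
    (hpq : Nat.Coprime p q) (R ρ : ℝ) (hR : 0 < R) (hρ : 0 < ρ)
    (hRρ : R ^ p = ρ ^ q) (hsph : R ^ 2 + ρ ^ 2 = 1) :
    {z : ℂ × ℂ | ‖z.1‖ ^ 2 + ‖z.2‖ ^ 2 = 1 ∧ z.1 ^ p - z.2 ^ q = 0} =
      {z : ℂ × ℂ | ∃ t : ℝ,
        z = ((R : ℂ) * Complex.exp (Complex.I * (q * t)),
             (ρ : ℂ) * Complex.exp (Complex.I * (p * t)))} := by
  ext ⟨u, v⟩
  simp only [Set.mem_ofPred_eq, Prod.mk.injEq, sub_eq_zero]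
  constructor
  · rintro ⟨huv_sph, huv⟩
    obtain ⟨hu, hv⟩ : ‖u‖ = R ∧ ‖v‖ = ρ :=
      eq_and_eq_of_pow_eq_pow_of_sq_add_sq_eq hp.ne' hq.ne' (norm_nonneg u) (norm_nonneg v)
        hR.le hρ.le (by rw [← norm_pow, ← norm_pow, huv]) hRρ (huv_sph.trans hsph.symm)
    obtain ⟨t, htu, htv⟩ := exists_eq_norm_mul_exp_of_pow_eq_pow hpq
      (norm_pos_iff.1 (hu ▸ hR)) (norm_pos_iff.1 (hv ▸ hρ)) huv
    exact ⟨t, hu ▸ htu, hv ▸ htv⟩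
  · rintro ⟨t, rfl, rfl⟩
    refine ⟨?_, ?_⟩
    · simpa [norm_exp] using hsph
    · rw [mul_pow, mul_pow, ← exp_nat_mul, ← exp_nat_mul, ← ofReal_pow, ← ofReal_pow, hRρ]
      ring_nf
end

section
/- Let s, ℓ be positive integers with gcd(s, ℓ) = 1, let r be a positive integer, and let a > 0, b > 0 be real. Then for all j, j′ ∈ {1, …, s} with j ≠ j′ and all h ∈ ℝ, one has (X_j(h), Y_j(h)) ≠ (X_{j′}(h), Y_{j′}(h)); equivalently Z_j(h) ≠ Z_{j′}(h). That is, the s strands of the lemniscate braid never intersect. -/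
open Complex Real

/-- If `gcd(s,ℓ) = 1` and `a, b > 0`, the `s` strands of the lemniscate braid never
intersect: `Z_j(h) ≠ Z_{j′}(h)` for `j ≠ j′`. -/
theorem lemniscate_strands_disjoint (s r ℓ : ℕ) (hs : 0 < s) (hr : 0 < r) (hℓ : 0 < ℓ)
    (hcop : Nat.Coprime s ℓ) (a b : ℝ) (ha : 0 < a) (hb : 0 < b) :
    ∀ j ∈ Finset.Icc 1 s, ∀ j' ∈ Finset.Icc 1 s, j ≠ j' → ∀ h : ℝ,
      lemniscateZ s r ℓ a b j h ≠ lemniscateZ s r ℓ a b j' h := by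
  intro j hj j' hj' hne h heq
  simp only [Finset.mem_Icc] at hj hj'
  set θ : ℝ := (r * h + 2 * Real.pi * ((j : ℝ) - 1)) / s with hθ
  set θ' : ℝ := (r * h + 2 * Real.pi * ((j' : ℝ) - 1)) / s with hθ'
  have hre : a * Real.cos θ = a * Real.cos θ' := by
    have := congrArg Complex.re heq
    simpa only [lemniscateZ, Complex.add_re, Complex.ofReal_re, Complex.mul_re,
      Complex.I_re, Complex.I_im, Complex.ofReal_im, zero_mul, one_mul, mul_zero,
      zero_sub, add_zero, sub_zero, neg_zero, hθ, hθ'] using this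
  have him : (b / ℓ) * Real.sin ((ℓ : ℝ) * θ) = (b / ℓ) * Real.sin ((ℓ : ℝ) * θ') := by
    have := congrArg Complex.im heq
    simpa only [lemniscateZ, Complex.add_im, Complex.ofReal_im, Complex.mul_im,
      Complex.I_re, Complex.I_im, Complex.ofReal_re, zero_mul, one_mul, mul_zero,
      zero_add, add_zero, sub_zero, zero_sub, neg_zero, hθ, hθ', mul_div_assoc]
      using this
  have hcos : Real.cos θ = Real.cos θ' := mul_left_cancel₀ ha.ne' hre
  have hsin : Real.sin ((ℓ : ℝ) * θ) = Real.sin ((ℓ : ℝ) * θ') := by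
    have hbl : b / (ℓ : ℝ) ≠ 0 := by positivity
    exact mul_left_cancel₀ hbl him
  set d : ℤ := (j' : ℤ) - (j : ℤ) with hd
  have hdne : d ≠ 0 := by
    simp only [hd, sub_ne_zero]
    exact_mod_cast fun hh => hne (by exact_mod_cast hh.symm)
  have hdlt : |d| < (s : ℤ) := by
    rw [abs_sub_lt_iff]; omega
  have hπ : (0 : ℝ) < Real.pi := Real.pi_pos
  have hsR : (s : ℝ) ≠ 0 := by positivity
  have hdiff : (s : ℝ) * (θ' - θ) = 2 * Real.pi * (d : ℝ) := by
    rw [hθ, hθ', div_sub_div_same, hd]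
    push_cast
    field_simp
    ring
  have hnd : ¬ ((s : ℤ) ∣ d) := fun hdvd => hdne (Int.eq_zero_of_abs_lt_dvd hdvd hdlt)
  rw [Real.sin_eq_sin_iff] at hsin
  rw [Real.cos_eq_cos_iff] at hcos
  obtain ⟨m, hm | hm⟩ := hsin
  · -- ℓ(θ'-θ) = 2mπ  ⇒  ℓ d = m s  ⇒  s ∣ d
    apply hnd
    have e1 : (ℓ : ℝ) * (θ' - θ) = 2 * m * Real.pi := by rw [mul_sub, hm]; ring
    have key : (2 * Real.pi) * ((ℓ : ℝ) * d) = (2 * Real.pi) * ((m : ℝ) * s) := by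
      calc (2 * Real.pi) * ((ℓ : ℝ) * d) = (ℓ : ℝ) * ((s : ℝ) * (θ' - θ)) := by
            rw [hdiff]; ring
        _ = (s : ℝ) * ((ℓ : ℝ) * (θ' - θ)) := by ring
        _ = (2 * Real.pi) * ((m : ℝ) * s) := by rw [e1]; ring
    have h2 : ((ℓ : ℤ) * d : ℝ) = ((m * s : ℤ) : ℝ) := by
      push_cast
      exact mul_left_cancel₀ (by positivity) key
    have hint : (ℓ : ℤ) * d = m * s := by exact_mod_cast h2
    have hdvd : (s : ℤ) ∣ d * (ℓ : ℤ) := ⟨m, by linarith [hint]⟩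
    exact (Nat.isCoprime_iff_coprime.mpr hcop).dvd_of_dvd_mul_right hdvd
  · obtain ⟨k, hk | hk⟩ := hcos
    · -- θ' - θ = 2kπ ⇒ d = k s ⇒ s ∣ d
      apply hnd
      have e1 : θ' - θ = 2 * k * Real.pi := by rw [hk]; ring
      have key : (2 * Real.pi) * (d : ℝ) = (2 * Real.pi) * ((k : ℝ) * s) := by
        calc (2 * Real.pi) * (d : ℝ) = (s : ℝ) * (θ' - θ) := by rw [hdiff]
          _ = (2 * Real.pi) * ((k : ℝ) * s) := by rw [e1]; ring
      have h2 : ((d : ℤ) : ℝ) = ((k * s : ℤ) : ℝ) := by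
        push_cast
        exact mul_left_cancel₀ (by positivity) key
      have hint : d = k * s := by exact_mod_cast h2
      exact ⟨k, by linarith [hint]⟩
    · -- θ' + θ = 2kπ and ℓ(θ'+θ) = (2m+1)π ⇒ 2kℓ = 2m+1, impossible
      have h1 : (ℓ : ℝ) * (θ' + θ) = (2 * m + 1) * Real.pi := by rw [mul_add, hm]; ring
      have h2 : (ℓ : ℝ) * (θ' + θ) = (2 * k * (ℓ : ℝ)) * Real.pi := by
        have : θ' + θ = 2 * k * Real.pi := by rw [hk]; ring
        rw [this]; ring
      have h3 : ((2 * m + 1 : ℤ) : ℝ) = ((2 * k * (ℓ : ℤ) : ℤ) : ℝ) := by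
        push_cast
        exact mul_right_cancel₀ (ne_of_gt hπ) (h1.symm.trans h2)
      have h4 : (2 * m + 1 : ℤ) = 2 * k * (ℓ : ℤ) := by exact_mod_cast h3
      have h5 : (2 : ℤ) ∣ 2 * m + 1 := h4 ▸ ⟨k * (ℓ : ℤ), by ring⟩
      omega
end

section
/- Let s ≥ 3 and r ≥ 1 be integers and a > 0 real. Then for h ∈ ℝ, there exist j, j′ ∈ {1, …, s} with j ≠ j′ and X_j(h) = X_{j′}(h) if and only if r·h is an integer multiple of π. That is, crossings in the planar braid diagram occur exactly at heights h with r·h ≡ 0 mod π. -/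
open Real

/-!
Two strands cross when `cos x = cos y` for their angles `x, y`, i.e. `y ≡ ±x (mod 2π)`.
The angles of distinct strands differ by `2π (j' - j) / s` with `0 < |j' - j| < s`, so only
`x + y ≡ 0` can occur, and it says `r h + (j + j' - 2) π ∈ s π ℤ`. Conversely, since `s ≥ 3`,
every residue class mod `s` is a sum `j + j'` of two distinct indices in `[1, s]`.
-/

lemma exists_ne_mem_Icc_add_modEq {s : ℕ} (hs : 3 ≤ s) (c : ℤ) :
    ∃ j ∈ Finset.Icc 1 s, ∃ j' ∈ Finset.Icc 1 s, j ≠ j' ∧ (j + j' : ℤ) ≡ c [ZMOD s] := by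
  by_cases hc : c ≡ 2 [ZMOD s]
  · refine ⟨2, Finset.mem_Icc.2 ⟨by omega, by omega⟩, s, Finset.mem_Icc.2 ⟨by omega, le_rfl⟩,
      by omega, ?_⟩
    calc ((2 : ℕ) + s : ℤ) ≡ 2 + 0 [ZMOD s] :=
          (Int.ModEq.refl 2).add (Int.modEq_zero_iff_dvd.2 dvd_rfl)
      _ ≡ c [ZMOD s] := by simpa using hc.symm
  · have hs0 : (0 : ℤ) < s := by omega
    set m := (c - 2) % (s : ℤ)
    have hm0 : 0 ≤ m := Int.emod_nonneg _ hs0.ne'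
    have hms : m < s := Int.emod_lt_of_pos _ hs0
    have hm : 2 + m ≡ c [ZMOD s] := by
      simpa using (Int.mod_modEq (c - 2) s).add_left 2
    have hm_ne : m ≠ 0 := fun h0 => hc (by simpa [h0] using hm.symm)
    refine ⟨1, Finset.mem_Icc.2 ⟨le_rfl, by omega⟩, m.toNat + 1,
      Finset.mem_Icc.2 ⟨by omega, by omega⟩, by omega, ?_⟩
    push_cast
    rw [Int.toNat_of_nonneg hm0]
    convert hm using 1
    ring

lemma eq_of_natCast_sub_eq_mul {s j j' : ℕ} (hj : j ∈ Finset.Icc 1 s) (hj' : j' ∈ Finset.Icc 1 s)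
    {k : ℤ} (h : (j' : ℤ) - j = k * s) : j = j' := by
  rw [Finset.mem_Icc] at hj hj'
  refine Nat.ModEq.eq_of_abs_lt (Nat.modEq_iff_dvd.2 ⟨k, by rw [h, mul_comm]⟩) ?_
  rw [abs_lt]; constructor <;> omega

lemma cos_strand_eq_cos_strand_iff {s j j' : ℕ} (hj : j ∈ Finset.Icc 1 s)
    (hj' : j' ∈ Finset.Icc 1 s) (hne : j ≠ j') (θ : ℝ) :
    cos ((θ + 2 * π * ((j : ℝ) - 1)) / s) = cos ((θ + 2 * π * ((j' : ℝ) - 1)) / s) ↔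
      ∃ q : ℤ, θ + (j + j' - 2) * π = q * s * π := by
  have hs : (s : ℝ) ≠ 0 := Nat.cast_ne_zero.2 (by rw [Finset.mem_Icc] at hj; omega)
  rw [cos_eq_cos_iff]
  refine ⟨?_, fun ⟨q, hq⟩ => ⟨q, Or.inr ?_⟩⟩
  · rintro ⟨k, hk | hk⟩
    · refine absurd (eq_of_natCast_sub_eq_mul hj hj' (k := k) ?_) hne
      field_simp at hk
      have hR : (j' : ℝ) - j = k * s :=
        mul_left_cancel₀ (by positivity : 2 * π ≠ 0) (by linear_combination hk)
      exact_mod_cast hR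
    · refine ⟨k, ?_⟩
      field_simp at hk
      linear_combination hk / 2
  · field_simp
    linear_combination 2 * hq

theorem lemniscate_crossing_heights_general (s r : ℕ) (hs : 3 ≤ s)
    (a : ℝ) (ha : 0 < a) (h : ℝ) :
    (∃ j ∈ Finset.Icc 1 s, ∃ j' ∈ Finset.Icc 1 s, j ≠ j' ∧
        a * Real.cos ((r * h + 2 * Real.pi * ((j : ℝ) - 1)) / s) =
          a * Real.cos ((r * h + 2 * Real.pi * ((j' : ℝ) - 1)) / s)) ↔
      ∃ k : ℤ, (r : ℝ) * h = k * Real.pi := by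
  simp_rw [mul_right_inj' ha.ne']
  constructor
  · rintro ⟨j, hj, j', hj', hne, hcos⟩
    obtain ⟨q, hq⟩ := (cos_strand_eq_cos_strand_iff hj hj' hne _).1 hcos
    exact ⟨q * s + 2 - j - j', by push_cast; linear_combination hq⟩
  · rintro ⟨k, hk⟩
    obtain ⟨j, hj, j', hj', hne, hjj'⟩ := exists_ne_mem_Icc_add_modEq hs (2 - k)
    obtain ⟨q, hq⟩ := hjj'.dvd
    refine ⟨j, hj, j', hj', hne, (cos_strand_eq_cos_strand_iff hj hj' hne _).2 ⟨-q, ?_⟩⟩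
    have hqR : (2 - k - (j + j') : ℝ) = s * q := by exact_mod_cast hq
    push_cast
    linear_combination hk - π * hqR

/-- For `s ≥ 3` strands, crossings in the planar braid diagram (two strands sharing the
same `X` coordinate `X_j(h) = a·cos((r·h + 2π(j−1))/s)`) occur exactly at heights `h`
with `r·h` an integer multiple of `π`. -/
theorem lemniscate_crossing_heights (s r : ℕ) (hs : 3 ≤ s) (hr : 1 ≤ r)
    (a : ℝ) (ha : 0 < a) (h : ℝ) :
    (∃ j ∈ Finset.Icc 1 s, ∃ j' ∈ Finset.Icc 1 s, j ≠ j' ∧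
        a * Real.cos ((r * h + 2 * Real.pi * ((j : ℝ) - 1)) / s) =
          a * Real.cos ((r * h + 2 * Real.pi * ((j' : ℝ) - 1)) / s)) ↔
      ∃ k : ℤ, (r : ℝ) * h = k * Real.pi :=
  lemniscate_crossing_heights_general s r hs a ha h
end

section
/- In the ring of 3×3 matrices over the Laurent polynomial ring ℤ[t, t⁻¹], for every integer n ≥ 1, the product Σ₁ⁿ · Σ₂⁻¹ · Σ₁ · (Σ₂⁻¹)ⁿ equals the matrix [[(1−t)·A_n, A_{n−1}·B_{n−1} + A_n·B_{n−2}, t·(A_n·B_{n−1} + A_{n−1}·B_n)], [(1−t)·A_{n−1}, A_{n−1}·B_{n−2} + A_{n−2}·B_{n−1}, t·(A_{n−1}·B_{n−1} + A_{n−2}·B_n)], [t⁻¹, t⁻¹·(1−t⁻¹)·B_{n−1}, (1−t⁻¹)·B_n]]. -/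
open LaurentPolynomial

/-- `A_m = Σ_{j=0}^{m} (−t)^j` for `m ≥ 0`, with `A_{−1} = 0`. -/
noncomputable def burauA (m : ℤ) : ℤ[T;T⁻¹] :=
  ∑ j ∈ Finset.range (m + 1).toNat, (-(T 1 : ℤ[T;T⁻¹])) ^ j

/-- `B_m = Σ_{k=0}^{m} (−t⁻¹)^k` for `m ≥ 0`, with `B_{−1} = 0`. -/
noncomputable def burauB (m : ℤ) : ℤ[T;T⁻¹] :=
  ∑ k ∈ Finset.range (m + 1).toNat, (-(T (-1) : ℤ[T;T⁻¹])) ^ k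

/-- The unreduced Burau matrix of `σ₁` on three strands. -/
noncomputable def Sigma1 : Matrix (Fin 3) (Fin 3) ℤ[T;T⁻¹] :=
  !![1 - T 1, T 1, 0; 1, 0, 0; 0, 0, 1]

/-- The unreduced Burau matrix of `σ₂⁻¹` on three strands. -/
noncomputable def Sigma2Inv : Matrix (Fin 3) (Fin 3) ℤ[T;T⁻¹] :=
  !![1, 0, 0; 0, 0, 1; 0, T (-1), 1 - T (-1)]

/-!
With `a k = ∑_{i<k} (-t)^i` and `b k = ∑_{i<k} (-t⁻¹)^i`, the recurrence `a (k + 1) = 1 - t a k`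
shows by induction that the powers of `Σ₁` and `Σ₂⁻¹` have entries `a k`, `t a k` and `b k`,
`t⁻¹ b k` for three consecutive `k`. Multiplying out the four factors and cancelling `t t⁻¹` gives
the claimed matrix, because `A_m = a (m + 1)` and `B_m = b (m + 1)`.
-/

open Finset Matrix

section Burau

variable {R : Type*} [CommRing R]

def geomSum (x : R) (k : ℕ) : R := ∑ i ∈ range k, x ^ i

lemma geomSum_zero (x : R) : geomSum x 0 = 0 := rfl

lemma geomSum_succ (x : R) (k : ℕ) : geomSum x (k + 1) = 1 + x * geomSum x k := by
  rw [geomSum, geom_sum_succ, add_comm, geomSum]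

lemma pow_succ_burau_sigma₁ (t : R) (m : ℕ) :
    !![1 - t, t, 0; 1, 0, 0; 0, 0, 1] ^ (m + 1) =
      !![geomSum (-t) (m + 2), t * geomSum (-t) (m + 1), 0;
         geomSum (-t) (m + 1), t * geomSum (-t) m, 0;
         0, 0, 1] := by
  induction m with
  | zero => simp [geomSum_zero, geomSum_succ, sub_eq_add_neg]
  | succ m ih =>
    rw [pow_succ, ih, mul_fin_three]
    simp only [geomSum_succ]
    ext i j
    fin_cases i <;> fin_cases j <;> simp <;> ring

lemma pow_succ_burau_sigma₂Inv (u : R) (m : ℕ) :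
    !![1, 0, 0; 0, 0, 1; 0, u, 1 - u] ^ (m + 1) =
      !![1, 0, 0;
         0, u * geomSum (-u) m, geomSum (-u) (m + 1);
         0, u * geomSum (-u) (m + 1), geomSum (-u) (m + 2)] := by
  induction m with
  | zero => simp [geomSum_zero, geomSum_succ, sub_eq_add_neg]
  | succ m ih =>
    rw [pow_succ, ih, mul_fin_three]
    simp only [geomSum_succ]
    ext i j
    fin_cases i <;> fin_cases j <;> simp <;> ring

lemma burau_lemniscate_product (t u : R) (htu : t * u = 1) (m : ℕ) :
    !![1 - t, t, 0; 1, 0, 0; 0, 0, 1] ^ (m + 1) * !![1, 0, 0; 0, 0, 1; 0, u, 1 - u] *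
        !![1 - t, t, 0; 1, 0, 0; 0, 0, 1] * !![1, 0, 0; 0, 0, 1; 0, u, 1 - u] ^ (m + 1) =
      !![(1 - t) * geomSum (-t) (m + 2),
           geomSum (-t) (m + 1) * geomSum (-u) (m + 1) + geomSum (-t) (m + 2) * geomSum (-u) m,
           t * (geomSum (-t) (m + 2) * geomSum (-u) (m + 1) +
             geomSum (-t) (m + 1) * geomSum (-u) (m + 2));
         (1 - t) * geomSum (-t) (m + 1),
           geomSum (-t) (m + 1) * geomSum (-u) m + geomSum (-t) m * geomSum (-u) (m + 1),
           t * (geomSum (-t) (m + 1) * geomSum (-u) (m + 1) +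
             geomSum (-t) m * geomSum (-u) (m + 2));
         u, u * (1 - u) * geomSum (-u) (m + 1), (1 - u) * geomSum (-u) (m + 2)] := by
  rw [pow_succ_burau_sigma₁, pow_succ_burau_sigma₂Inv, mul_fin_three, mul_fin_three,
    mul_fin_three]
  simp only [EmbeddingLike.apply_eq_iff_eq, vecCons_inj, and_true, true_and, mul_zero, zero_mul,
    mul_one, one_mul, add_zero, zero_add]
  set a := geomSum (-t)
  set b := geomSum (-u)
  refine ⟨⟨by ring, ?_, by ring⟩, ⟨by ring, ?_, by ring⟩, by ring⟩
  · linear_combination (a (m + 2) * b m + a (m + 1) * b (m + 1)) * htu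
  · linear_combination (a (m + 1) * b m + a m * b (m + 1)) * htu

end Burau

lemma burauA_eq_geomSum (m : ℤ) : burauA m = geomSum (-T 1) (m + 1).toNat := rfl

lemma burauB_eq_geomSum (m : ℤ) : burauB m = geomSum (-T (-1)) (m + 1).toNat := rfl

/-- The Burau image of the braid word `σ₁ⁿσ₂⁻¹σ₁σ₂⁻ⁿ`, whose closure is (the mirror of)
the lemniscate knot `L(2n+1, 2, 2)`. -/
theorem burau_image_lemniscate_braid_word (n : ℕ) (hn : 1 ≤ n) :
    Sigma1 ^ n * Sigma2Inv * Sigma1 * Sigma2Inv ^ n =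
      !![(1 - T 1) * burauA n,
           burauA ((n : ℤ) - 1) * burauB ((n : ℤ) - 1) + burauA n * burauB ((n : ℤ) - 2),
           T 1 * (burauA n * burauB ((n : ℤ) - 1) + burauA ((n : ℤ) - 1) * burauB n);
         (1 - T 1) * burauA ((n : ℤ) - 1),
           burauA ((n : ℤ) - 1) * burauB ((n : ℤ) - 2) +
             burauA ((n : ℤ) - 2) * burauB ((n : ℤ) - 1),
           T 1 * (burauA ((n : ℤ) - 1) * burauB ((n : ℤ) - 1) +
             burauA ((n : ℤ) - 2) * burauB n);
         T (-1), T (-1) * (1 - T (-1)) * burauB ((n : ℤ) - 1), (1 - T (-1)) * burauB n] := by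
  obtain ⟨m, rfl⟩ := Nat.exists_eq_add_of_le' hn
  have h₀ : (((m + 1 : ℕ) : ℤ) + 1).toNat = m + 2 := by omega
  have h₁ : (((m + 1 : ℕ) : ℤ) - 1 + 1).toNat = m + 1 := by omega
  have h₂ : (((m + 1 : ℕ) : ℤ) - 2 + 1).toNat = m := by omega
  simp only [burauA_eq_geomSum, burauB_eq_geomSum, h₀, h₁, h₂]
  exact burau_lemniscate_product (T 1) (T (-1)) (by rw [← T_add]; simp) m
end

section
/- In the ring of Laurent polynomials ℤ[t, t⁻¹], for every integer n ≥ 0, 1 − A_n − B_n + 2·A_n·B_n = Σ_{k=−n}^{n} (−1)^k·(2·(n − |k|) + 1)·t^k, where A_n = Σ_{j=0}^{n} (−t)^j and B_n = Σ_{k=0}^{n} (−t⁻¹)^k. (Up to the overall unit sign (−1)^n, this Laurent polynomial is the Alexander polynomial Δ(t) = Σ_{k=−n}^{n} (−1)^{n+k}(2(n−|k|)+1)t^k of the lemniscate knot L(2n+1, 2, 2), as asserted in Theorem 2 of the paper.) -/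
/-!
Write `g d = (-t) ^ d` for `d : ℤ`; it is multiplicative, `A_n = ∑ g j` and `B_n = ∑ g (-k)`.
Hence `A_n * B_n = ∑_{j,k ≤ n} g (j - k) = ∑_{|d| ≤ n} (n + 1 - |d|) g d`, counting the pairs
with `j - k = d`, while `A_n + B_n = 1 + ∑_{|d| ≤ n} g d`. So the coefficient of `g d` in
`1 - A_n - B_n + 2 A_n B_n` is `2 (n + 1 - |d|) - 1`.
-/

open Finset
open LaurentPolynomial

section SymmetricSums

variable {M : Type*} [AddCommMonoid M] (g : ℤ → M)

theorem sum_Icc_neg_add_apply_zero (n : ℕ) :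
    ∑ d ∈ Icc (-(n : ℤ)) n, g d + g 0 =
      ∑ j ∈ range (n + 1), g j + ∑ j ∈ range (n + 1), g (-j) := by
  induction n with
  | zero => simp
  | succ n ih =>
    have hIcc : Icc (-((n + 1 : ℕ) : ℤ)) (n + 1 : ℕ) =
        insert (-((n : ℤ) + 1)) (insert ((n : ℤ) + 1) (Icc (-(n : ℤ)) n)) := by
      ext d
      simp only [mem_Icc, mem_insert]
      omega
    rw [hIcc, sum_insert (by simp only [mem_insert, mem_Icc]; omega),
      sum_insert (by simp only [mem_Icc]; omega), sum_range_succ _ (n + 1),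
      sum_range_succ (fun j : ℕ => g (-j)) (n + 1), add_assoc, add_assoc, ih]
    push_cast
    abel

theorem sum_range_sum_range_sub_add_nsmul (n : ℕ) :
    ∑ j ∈ range (n + 1), ∑ k ∈ range (n + 1), g (j - k) + (n + 1) • g 0 =
      ∑ j ∈ range (n + 1), (n + 1 - j) • (g j + g (-j)) := by
  induction n with
  | zero => simp
  | succ n ih =>
    have hS : ∑ j ∈ range (n + 1 + 1), ∑ k ∈ range (n + 1 + 1), g (j - k) + g 0 =
        ∑ j ∈ range (n + 1), ∑ k ∈ range (n + 1), g (j - k) +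
          ∑ j ∈ range (n + 1 + 1), (g j + g (-j)) := by
      simp only [sum_range_succ' _ (n + 1), sum_add_distrib]
      push_cast
      simp only [add_sub_add_right_eq_sub, sub_zero, zero_sub, neg_zero]
      abel
    have hP : ∑ j ∈ range (n + 1 + 1), (n + 1 + 1 - j) • (g j + g (-j)) =
        ∑ j ∈ range (n + 1), (n + 1 - j) • (g j + g (-j)) +
          ∑ j ∈ range (n + 1 + 1), (g j + g (-j)) := by
      have hcoef : ∀ j ∈ range (n + 1), (n + 1 + 1 - j) • (g j + g (-j)) =
          (n + 1 - j) • (g j + g (-j)) + (g j + g (-j)) := fun j hj => by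
        rw [← succ_nsmul]
        congr 1
        have := mem_range.mp hj
        omega
      rw [sum_range_succ _ (n + 1), sum_congr rfl hcoef, sum_add_distrib, Nat.add_sub_cancel_left,
        one_smul, add_assoc, ← sum_range_succ (fun j : ℕ => g j + g (-j))]
    rw [hP, ← ih, succ_nsmul, ← add_assoc, add_right_comm, hS]
    abel

end SymmetricSums

section MultiplicativeSums

variable {R : Type*} [CommRing R] {g : ℤ → R}

theorem sum_range_mul_sum_range_neg (hg : ∀ a b, g (a + b) = g a * g b) (n : ℕ) :
    (∑ j ∈ range (n + 1), g j) * ∑ k ∈ range (n + 1), g (-k) =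
      ∑ j ∈ range (n + 1), ∑ k ∈ range (n + 1), g (j - k) := by
  simp only [sum_mul_sum, sub_eq_add_neg, hg]

theorem one_sub_sub_add_two_mul_sum_range_mul_sum_range_neg (hg0 : g 0 = 1)
    (hg : ∀ a b, g (a + b) = g a * g b) (n : ℕ) :
    1 - ∑ j ∈ range (n + 1), g j - ∑ k ∈ range (n + 1), g (-k) +
        2 * (∑ j ∈ range (n + 1), g j) * ∑ k ∈ range (n + 1), g (-k) =
      ∑ d ∈ Icc (-(n : ℤ)) n, ((2 * (n - |d|) + 1 : ℤ) : R) * g d := by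
  have hP := sum_range_sum_range_sub_add_nsmul g n
  simp only [nsmul_eq_mul, hg0, Nat.cast_add_one, mul_one] at hP
  have hRHS : ∑ j ∈ range (n + 1), ((2 * (n - |(j : ℤ)|) + 1 : ℤ) : R) * g j +
      ∑ j ∈ range (n + 1), ((2 * (n - |(-j : ℤ)|) + 1 : ℤ) : R) * g (-j) =
      2 * ∑ j ∈ range (n + 1), ((n + 1 - j : ℕ) : R) * (g j + g (-j)) -
        ∑ j ∈ range (n + 1), g j - ∑ j ∈ range (n + 1), g (-j) := by
    rw [mul_sum, ← sum_add_distrib, ← sum_sub_distrib, ← sum_sub_distrib]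
    refine sum_congr rfl fun j hj => ?_
    rw [Nat.cast_sub (mem_range.mp hj).le, abs_neg, Nat.abs_cast]
    push_cast
    ring
  apply add_right_cancel (b := ((2 * (n - |0|) + 1 : ℤ) : R) * g 0)
  rw [sum_Icc_neg_add_apply_zero, hRHS, mul_assoc, sum_range_mul_sum_range_neg hg, hg0]
  push_cast
  linear_combination 2 * hP

end MultiplicativeSums

theorem LaurentPolynomial.neg_T_pow {R : Type*} [CommRing R] (m : ℤ) (j : ℕ) :
    (-(T m : R[T;T⁻¹])) ^ j = (((j : ℤ).negOnePow : ℤ) : R[T;T⁻¹]) * T (j * m) := by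
  rw [neg_pow, T_pow, Int.coe_negOnePow_natCast]
  push_cast
  ring

/-- In `ℤ[t,t⁻¹]`, with `A_n = Σ_{j=0}^n (−t)^j` and `B_n = Σ_{k=0}^n (−t⁻¹)^k`,
`1 − A_n − B_n + 2·A_n·B_n = Σ_{k=−n}^{n} (−1)^k·(2(n−|k|)+1)·t^k`, which up to a unit is
the Alexander polynomial of the lemniscate knot `L(2n+1, 2, 2)`. -/
theorem alexander_polynomial_figure_eight_family (n : ℕ) :
    (1 : ℤ[T;T⁻¹]) - (∑ j ∈ Finset.range (n + 1), (-(T 1 : ℤ[T;T⁻¹])) ^ j)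
      - (∑ k ∈ Finset.range (n + 1), (-(T (-1) : ℤ[T;T⁻¹])) ^ k)
      + 2 * (∑ j ∈ Finset.range (n + 1), (-(T 1 : ℤ[T;T⁻¹])) ^ j) *
          (∑ k ∈ Finset.range (n + 1), (-(T (-1) : ℤ[T;T⁻¹])) ^ k) =
    ∑ k ∈ Finset.Icc (-(n : ℤ)) (n : ℤ),
      ((((Int.negOnePow k : ℤˣ) : ℤ) * (2 * ((n : ℤ) - |k|) + 1) : ℤ) : ℤ[T;T⁻¹]) * T k := by
  let g : ℤ → ℤ[T;T⁻¹] := fun d => ((d.negOnePow : ℤ) : ℤ[T;T⁻¹]) * T d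
  have hg0 : g 0 = 1 := by simp [g]
  have hg (a b : ℤ) : g (a + b) = g a * g b := by
    simp only [g, Int.negOnePow_add, T_add, Units.val_mul, Int.cast_mul]
    ring
  have hpos (j : ℕ) : (-(T 1 : ℤ[T;T⁻¹])) ^ j = g j := by rw [neg_T_pow, mul_one]
  have hneg (k : ℕ) : (-(T (-1) : ℤ[T;T⁻¹])) ^ k = g (-k) := by
    rw [neg_T_pow, mul_neg_one, ← Int.negOnePow_neg]
  simp only [hpos, hneg]
  rw [one_sub_sub_add_two_mul_sum_range_mul_sum_range_neg hg0 hg]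
  refine sum_congr rfl fun d _ => ?_
  push_cast
  ring
end

section
/- Let r ≥ 1 be an integer and for j = 1, 2, 3 and h ∈ ℝ set Z_j(h) = cos((r·h + 2π(j−1))/3) + (i/2)·sin(2·(r·h + 2π(j−1))/3). Then for all u ∈ ℂ and h ∈ ℝ, with w = e^{i·r·h} and w̄ = e^{−i·r·h}: 64·∏_{j=1}^{3} (u − Z_j(h)) = 64u³ − 12u·(3 + 2(w − w̄)) − 14(w + w̄) − (w² − w̄²). -/
/-!
Put `z = e^{irh/3}` and `ω = e^{2πi/3}`. Since `cos θ + (i/2) sin 2θ = L(e^{iθ})` for the Laurent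
polynomial `L(z) = (z + z⁻¹)/2 + (z² - z⁻²)/4`, the three points are `Z_j(h) = L(ω^{j-1} z)`,
i.e. `L` evaluated at the three cube roots of `w = z³`. The product `∏ (u - L(ω^k z))` is therefore
symmetric in those roots, and a direct expansion modulo `ω² + ω + 1 = 0` leaves only powers of `z³`.
-/

open Complex Real

def lemniscatePoint {K : Type*} [Field K] (z : K) : K := (z + z⁻¹) / 2 + (z ^ 2 - z⁻¹ ^ 2) / 4

theorem prod_range_three_sub_lemniscatePoint {K : Type*} [Field K] [NeZero (2 : K)]
    (u z ω : K) (hz : z ≠ 0) (hω : ω ^ 2 + ω + 1 = 0) :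
    64 * ∏ k ∈ Finset.range 3, (u - lemniscatePoint (ω ^ k * z)) =
      64 * u ^ 3 - 12 * u * (3 + 2 * (z ^ 3 - (z ^ 3)⁻¹)) - 14 * (z ^ 3 + (z ^ 3)⁻¹)
        - ((z ^ 3) ^ 2 - (z ^ 3)⁻¹ ^ 2) := by
  have hω0 : ω ≠ 0 := by rintro rfl; norm_num at hω
  have h4 : (4 : K) ≠ 0 := by
    rw [show (4 : K) = 2 * 2 by norm_num]; exact mul_ne_zero two_ne_zero two_ne_zero
  simp only [Finset.prod_range_succ, Finset.prod_range_zero, lemniscatePoint]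
  field_simp
  grind

theorem ofReal_cos_add_I_div_two_mul_sin_two_mul (θ : ℝ) :
    ((Real.cos θ : ℝ) : ℂ) + I / 2 * ((Real.sin (2 * θ) : ℝ) : ℂ) =
      lemniscatePoint (exp (θ * I)) := by
  have hinv : (exp (θ * I))⁻¹ = exp (-θ * I) := by rw [← Complex.exp_neg, neg_mul]
  have hsq (x : ℂ) : exp (x * I) ^ 2 = exp ((2 * x) * I) := by
    rw [← Complex.exp_nat_mul]; push_cast; ring_nf
  rw [lemniscatePoint, hinv, hsq, hsq, mul_neg, ofReal_cos, ofReal_sin]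
  push_cast
  linear_combination (1 / 2 : ℂ) * two_cos θ + I / 4 * two_sin (2 * θ)
    + (exp (-(2 * θ) * I) - exp (2 * θ * I)) / 4 * I_sq

theorem exp_add_two_pi_mul_div_three_mul_I (x : ℝ) (k : ℕ) :
    exp (((x + 2 * π * k) / 3 : ℝ) * I) = exp (2 * π * I / 3) ^ k * exp ((x / 3 : ℝ) * I) := by
  rw [← Complex.exp_nat_mul, ← Complex.exp_add]
  push_cast
  ring_nf

theorem exp_two_pi_I_div_three_sq_add_self_add_one :
    exp (2 * π * I / 3) ^ 2 + exp (2 * π * I / 3) + 1 = 0 := by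
  have := (isPrimitiveRoot_exp 3 three_ne_zero).geom_sum_eq_zero (by norm_num)
  simp only [Finset.sum_range_succ, Finset.sum_range_zero] at this
  push_cast at this
  linear_combination this

theorem figure_eight_braid_polynomial_general (r : ℕ) (u : ℂ) (h : ℝ) :
    64 * ∏ j ∈ Finset.Icc (1 : ℕ) 3,
        (u - (((Real.cos ((r * h + 2 * Real.pi * ((j : ℝ) - 1)) / 3) : ℝ) : ℂ) +
          Complex.I / 2 * ((Real.sin (2 * (r * h + 2 * Real.pi * ((j : ℝ) - 1)) / 3) : ℝ) : ℂ))) =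
      64 * u ^ 3
        - 12 * u * (3 + 2 * (Complex.exp (Complex.I * (r * h : ℝ))
            - Complex.exp (-(Complex.I * (r * h : ℝ)))))
        - 14 * (Complex.exp (Complex.I * (r * h : ℝ)) + Complex.exp (-(Complex.I * (r * h : ℝ))))
        - (Complex.exp (Complex.I * (r * h : ℝ)) ^ 2
            - Complex.exp (-(Complex.I * (r * h : ℝ))) ^ 2) := by
  have hcube : exp ((r * h / 3 : ℝ) * I) ^ 3 = exp (I * (r * h : ℝ)) := by
    rw [← Complex.exp_nat_mul]; push_cast; ring_nf
  rw [← Finset.Ico_add_one_right_eq_Icc, Finset.prod_Ico_eq_prod_range, Complex.exp_neg]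
  simp only [Nat.cast_add, Nat.cast_one, add_sub_cancel_left, mul_div_assoc (2 : ℝ),
    ofReal_cos_add_I_div_two_mul_sin_two_mul, exp_add_two_pi_mul_div_three_mul_I]
  rw [← hcube]
  exact prod_range_three_sub_lemniscatePoint u _ _ (Complex.exp_ne_zero _)
    exp_two_pi_I_div_three_sq_add_self_add_one

/-- The figure-8 family identity: with
`Z_j(h) = cos((r·h + 2π(j−1))/3) + (i/2)·sin(2·(r·h + 2π(j−1))/3)`, `w = e^{irh}`,
`w̄ = e^{−irh}`: `64·∏_{j=1}^{3}(u − Z_j(h)) = 64u³ − 12u(3 + 2(w − w̄)) − 14(w + w̄) − (w² − w̄²)`. -/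
theorem figure_eight_braid_polynomial (r : ℕ) (hr : 1 ≤ r) (u : ℂ) (h : ℝ) :
    64 * ∏ j ∈ Finset.Icc (1 : ℕ) 3,
        (u - (((Real.cos ((r * h + 2 * Real.pi * ((j : ℝ) - 1)) / 3) : ℝ) : ℂ) +
          Complex.I / 2 * ((Real.sin (2 * (r * h + 2 * Real.pi * ((j : ℝ) - 1)) / 3) : ℝ) : ℂ))) =
      64 * u ^ 3
        - 12 * u * (3 + 2 * (Complex.exp (Complex.I * (r * h : ℝ))
            - Complex.exp (-(Complex.I * (r * h : ℝ)))))
        - 14 * (Complex.exp (Complex.I * (r * h : ℝ)) + Complex.exp (-(Complex.I * (r * h : ℝ))))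
        - (Complex.exp (Complex.I * (r * h : ℝ)) ^ 2
            - Complex.exp (-(Complex.I * (r * h : ℝ))) ^ 2) :=
  figure_eight_braid_polynomial_general r u h
end

section
/- For all u ∈ ℂ and h ∈ ℝ, setting α = e^{3ih/2}, β = (i/4)·e^{ih/4}, γ = (1/4)·e^{ih/4} and v = e^{ih}: 256·(u − (α + β))·(u − (α − β))·(u + (α + γ))·(u + (α − γ)) = 256u⁴ − 512u²v³ + 64uv² − v + 256v⁶. -/
open Complex

/-- The identity behind the paper's polynomial for the satellite knot `13n4587`: with
`α = e^{3ih/2}`, `β = (i/4)·e^{ih/4}`, `γ = (1/4)·e^{ih/4}`, `v = e^{ih}`: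
`256(u − (α+β))(u − (α−β))(u + (α+γ))(u + (α−γ)) = 256u⁴ − 512u²v³ + 64uv² − v + 256v⁶`. -/
theorem cable_braid_polynomial (u : ℂ) (h : ℝ) :
    let α : ℂ := Complex.exp (3 * Complex.I * h / 2)
    let β : ℂ := Complex.I / 4 * Complex.exp (Complex.I * h / 4)
    let γ : ℂ := (1 / 4 : ℂ) * Complex.exp (Complex.I * h / 4)
    let v : ℂ := Complex.exp (Complex.I * h)
    256 * (u - (α + β)) * (u - (α - β)) * (u + (α + γ)) * (u + (α - γ)) =
      256 * u ^ 4 - 512 * u ^ 2 * v ^ 3 + 64 * u * v ^ 2 - v + 256 * v ^ 6 := by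
  intro α β γ v
  set w : ℂ := Complex.exp (Complex.I * h / 4) with hw
  have hα : α = w ^ 6 := by
    rw [hw, ← Complex.exp_nat_mul]
    norm_num [α]
    ring_nf
  have hv : v = w ^ 4 := by
    rw [hw, ← Complex.exp_nat_mul]
    norm_num [v]
    ring_nf
  rw [hα, hv]
  show 256 * (u - (w ^ 6 + Complex.I / 4 * w)) * (u - (w ^ 6 - Complex.I / 4 * w)) *
      (u + (w ^ 6 + (1 / 4 : ℂ) * w)) * (u + (w ^ 6 - (1 / 4 : ℂ) * w)) = _
  linear_combination (-16 * w ^ 2 * ((u + w ^ 6 + w / 4) * (u + w ^ 6 - w / 4))) *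
    Complex.I_sq
end

section
/- Let s, r, ℓ be positive integers, a, b real numbers, and n an integer. There exists a polynomial F in three complex variables (u, v, w) with complex coefficients such that for all u ∈ ℂ and all h ∈ ℝ, F(u, e^{ih}, e^{−ih}) = ∏_{j=1}^{s} (u − e^{i·n·h}·Z_j(h)); that is, the braid polynomial of the rotating lemniscate braid (where the lemniscate figure performs n full rotations as h increases by 2π) is again a polynomial in u, e^{ih} and e^{−ih}. -/
open Complex Real

/-!
Writing `cos` and `sin` as sums of exponentials, every strand `e^{inh} Z_j(h)` is a finite
combination of the modes `h ↦ e^{iωh}`, `ω ∈ ℝ`; these span an algebra, so the coefficients of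
`∏ⱼ (u - e^{inh} Z_j(h))` as a polynomial in `u` are such combinations too. Replacing `h` by
`h + 2π` sends strand `j` to strand `j + r` (indices mod `s`), so the coefficients are
`2π`-periodic. Since the modes are linearly independent characters of `ℝ`, a `2π`-periodic
combination involves only the integer frequencies, i.e. it is a polynomial in `e^{ih}` and
`e^{-ih}`.
-/

open Submodule Set Function Polynomial

namespace RotatingLemniscate

noncomputable def expMode (ω : ℝ) : ℝ → ℂ := fun t => exp (I * (ω * t : ℝ))

theorem expMode_add (ω ω' : ℝ) : expMode (ω + ω') = expMode ω * expMode ω' := by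
  funext t
  simp only [expMode, Pi.mul_apply, ← Complex.exp_add]
  push_cast
  ring_nf

theorem expMode_zero : expMode 0 = 1 := by
  funext t
  simp [expMode]

theorem expMode_add_apply (ω T t : ℝ) :
    expMode ω (t + T) = exp (I * (ω * T : ℝ)) * expMode ω t := by
  simp only [expMode, ← Complex.exp_add]
  push_cast
  ring_nf

theorem expMode_nsmul (m : ℕ) (ω : ℝ) : expMode (m • ω) = expMode ω ^ m := by
  induction m with
  | zero => simp [expMode_zero]
  | succ m ih => rw [succ_nsmul, expMode_add, ih, pow_succ]

theorem expMode_injective : Injective expMode := by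
  intro ω ω' hω
  by_contra hne
  have hsub : ω - ω' ≠ 0 := sub_ne_zero.mpr hne
  -- at `t = π / (ω - ω')` the two modes differ by the factor `e^{iπ} = -1`
  set t := π / (ω - ω')
  have hsplit := congrFun (expMode_add (ω - ω') ω') t
  rw [sub_add_cancel, hω, Pi.mul_apply] at hsplit
  have hone : expMode (ω - ω') t = 1 :=
    (mul_eq_right₀ (Complex.exp_ne_zero _)).mp hsplit.symm
  simp only [expMode, t, mul_div_cancel₀ _ hsub, mul_comm I, exp_pi_mul_I] at hone
  norm_num at hone

theorem linearIndependent_expMode : LinearIndependent ℂ expMode := by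
  let χ : ℝ → Multiplicative ℝ →* ℂ := fun ω =>
    { toFun := fun t => expMode ω t.toAdd
      map_one' := by simp [expMode]
      map_mul' := fun t t' => by rw [toAdd_mul, expMode_add_apply, mul_comm]; rfl }
  have hχ : Injective χ := fun ω ω' h =>
    expMode_injective (funext fun t => DFunLike.congr_fun h (.ofAdd t))
  exact (linearIndependent_monoidHom (Multiplicative ℝ) ℂ).comp χ hχ

theorem span_expMode_mul_mem {f g : ℝ → ℂ} (hf : f ∈ span ℂ (range expMode))
    (hg : g ∈ span ℂ (range expMode)) : f * g ∈ span ℂ (range expMode) := by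
  have hle : span ℂ (range expMode) * span ℂ (range expMode) ≤ span ℂ (range expMode) := by
    rw [span_mul_span, span_le]
    rintro _ ⟨_, ⟨ω, rfl⟩, _, ⟨ω', rfl⟩, rfl⟩
    exact subset_span ⟨ω + ω', expMode_add ω ω'⟩
  exact hle (mul_mem_mul hf hg)

noncomputable def trigPoly : Subalgebra ℂ (ℝ → ℂ) :=
  (span ℂ (range expMode)).toSubalgebra (expMode_zero ▸ subset_span ⟨0, rfl⟩)
    fun _ _ => span_expMode_mul_mem

theorem mem_trigPoly_iff {f : ℝ → ℂ} : f ∈ trigPoly ↔ f ∈ span ℂ (range expMode) := Iff.rfl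

theorem expMode_mem_trigPoly (ω : ℝ) : expMode ω ∈ trigPoly := subset_span ⟨ω, rfl⟩

theorem expMode_intCast_periodic (k : ℤ) : Periodic (expMode k) (2 * π) := fun t => by
  have hone : exp (I * (k * (2 * π) : ℝ)) = 1 :=
    Complex.exp_eq_one_iff.mpr ⟨k, by push_cast; ring⟩
  rw [expMode_add_apply, hone, one_mul]

theorem mem_span_expMode_of_periodic {f : ℝ → ℂ} {T : ℝ} (hf : f ∈ trigPoly)
    (hT : Periodic f T) :
    f ∈ span ℂ (expMode '' {ω | exp (I * (ω * T : ℝ)) = 1}) := by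
  rw [mem_trigPoly_iff, ← image_univ, Finsupp.mem_span_image_iff_linearCombination] at hf
  obtain ⟨c, -, rfl⟩ := hf
  refine (Finsupp.mem_span_image_iff_linearCombination ℂ).mpr ⟨c, fun ω hω => ?_, rfl⟩
  have hshift : ∑ ω ∈ c.support, (c ω * (exp (I * (ω * T : ℝ)) - 1)) • expMode ω = 0 := by
    funext t
    have hTt := hT t
    simp only [Finsupp.linearCombination_apply, Finsupp.sum, Finset.sum_apply, Pi.smul_apply,
      smul_eq_mul, expMode_add_apply] at hTt
    simp only [Finset.sum_apply, Pi.smul_apply, smul_eq_mul, Pi.zero_apply, mul_sub, sub_mul,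
      Finset.sum_sub_distrib, mul_one]
    rw [← hTt, sub_eq_zero]
    exact Finset.sum_congr rfl fun _ _ => mul_assoc _ _ _
  have hcoeff := linearIndependent_iff'.mp linearIndependent_expMode _ _ hshift ω hω
  exact sub_eq_zero.mp ((mul_eq_zero.mp hcoeff).resolve_left (Finsupp.mem_support_iff.mp hω))

noncomputable def circleEval : MvPolynomial (Fin 2) ℂ →ₐ[ℂ] (ℝ → ℂ) :=
  MvPolynomial.aeval ![expMode 1, expMode (-1)]

theorem evalRingHom_comp_circleEval (t : ℝ) :
    (Pi.evalRingHom (fun _ => ℂ) t).comp (circleEval : MvPolynomial (Fin 2) ℂ →+* (ℝ → ℂ)) =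
      MvPolynomial.eval ![exp (I * t), exp (-(I * t))] := by
  ext i
  · simp [circleEval]
  · fin_cases i <;> simp [circleEval, expMode]

theorem expMode_intCast_mem_range (k : ℤ) : expMode k ∈ circleEval.range := by
  obtain ⟨m, rfl | rfl⟩ := Int.eq_nat_or_neg k
  · refine ⟨MvPolynomial.X 0 ^ m, ?_⟩
    simp [circleEval, ← expMode_nsmul]
  · refine ⟨MvPolynomial.X 1 ^ m, ?_⟩
    simp [circleEval, ← expMode_nsmul]

theorem mem_range_circleEval_of_periodic {f : ℝ → ℂ} (hf : f ∈ trigPoly)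
    (hT : Periodic f (2 * π)) :
    f ∈ circleEval.range := by
  refine (span_le (p := Subalgebra.toSubmodule circleEval.range)).mpr ?_
    (mem_span_expMode_of_periodic hf hT)
  rintro _ ⟨ω, hω, rfl⟩
  obtain ⟨k, hk⟩ := Complex.exp_eq_one_iff.mp hω
  have hπ : (2 * π * I : ℂ) ≠ 0 := by simp [pi_ne_zero]
  have hωk : (ω : ℂ) = k := mul_right_cancel₀ hπ (by push_cast at hk ⊢; linear_combination hk)
  rw [show ω = k by exact_mod_cast hωk]
  exact expMode_intCast_mem_range k

theorem exists_eval_eq_of_coeff_periodic (P : (ℝ → ℂ)[X]) (hmem : ∀ k, P.coeff k ∈ trigPoly)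
    (hper : ∀ k, Periodic (P.coeff k) (2 * π)) :
    ∃ F : MvPolynomial (Fin 3) ℂ, ∀ (u : ℂ) (t : ℝ),
      MvPolynomial.eval ![u, exp (I * t), exp (-(I * t))] F =
        (P.map (Pi.evalRingHom (fun _ => ℂ) t)).eval u := by
  obtain ⟨Q, rfl⟩ : P ∈ lifts (circleEval : MvPolynomial (Fin 2) ℂ →+* (ℝ → ℂ)) :=
    (lifts_iff_coeff_lifts P).mpr fun k => mem_range_circleEval_of_periodic (hmem k) (hper k)
  refine ⟨(MvPolynomial.finSuccEquiv ℂ 2).symm Q, fun u t => ?_⟩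
  rw [coe_mapRingHom, Polynomial.map_map, evalRingHom_comp_circleEval]
  exact (MvPolynomial.eval_eq_eval_mv_eval' _ u _).trans (by rw [AlgEquiv.apply_symm_apply])

theorem coeff_prod_X_sub_C_mem {R ι : Type*} [CommRing R] (S : Subring R) (s : Finset ι)
    {g : ι → R} (hg : ∀ i, g i ∈ S) (k : ℕ) : (∏ i ∈ s, (X - C (g i))).coeff k ∈ S := by
  have hlift :
      ∏ i ∈ s, (X - C (g i)) = (∏ i ∈ s, (X - C (⟨g i, hg i⟩ : S))).map S.subtype := by
    simp [Polynomial.map_prod]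
  rw [hlift, coeff_map]
  exact SetLike.coe_mem _

theorem map_evalRingHom_prod_X_sub_C {ι : Type*} (s : Finset ι) (g : ι → ℝ → ℂ) (t : ℝ) :
    (∏ j ∈ s, (X - C (g j))).map (Pi.evalRingHom (fun _ => ℂ) t) = ∏ j ∈ s, (X - C (g j t)) := by
  simp [Polynomial.map_prod]

theorem prod_range_add_of_periodic {M : Type*} [CommMonoid M] {v : ℕ → M} {s : ℕ}
    (hv : Periodic v s) (r : ℕ) :
    ∏ j ∈ Finset.range s, v (j + r) = ∏ j ∈ Finset.range s, v j := by
  induction r with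
  | zero => rfl
  | succ r ih =>
    rw [← ih]
    obtain _ | t := s
    · rfl
    have hwrap : v (t + 1 + r) = v r := by rw [add_comm]; exact hv r
    rw [Finset.prod_range_succ, Finset.prod_range_succ' (fun j => v (j + r)), zero_add, ← hwrap]
    simp only [add_right_comm _ 1 r, add_assoc]

theorem prod_Icc_add_of_periodic {M : Type*} [CommMonoid M] {v : ℕ → M} {s : ℕ}
    (hv : Periodic v s) (r : ℕ) :
    ∏ j ∈ Finset.Icc 1 s, v (j + r) = ∏ j ∈ Finset.Icc 1 s, v j := by
  have hIcc : ∀ w : ℕ → M, ∏ j ∈ Finset.Icc 1 s, w j = ∏ j ∈ Finset.range s, w (j + 1) := by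
    intro w
    rw [← Finset.Ico_add_one_right_eq_Icc, Finset.range_eq_Ico, Finset.prod_Ico_add']
  rw [hIcc, hIcc]
  simp only [add_right_comm _ 1 r]
  exact prod_range_add_of_periodic (hv.add_const 1) r

theorem coeff_prod_X_sub_C_periodic {g : ℕ → ℝ → ℂ} {s r : ℕ} {T : ℝ} (hg : Periodic g s)
    (hshift : ∀ j t, g j (t + T) = g (j + r) t) (k : ℕ) :
    Periodic ((∏ j ∈ Finset.Icc 1 s, (X - C (g j))).coeff k) T := fun t => by
  have hcoeff : ∀ t, (∏ j ∈ Finset.Icc 1 s, (X - C (g j))).coeff k t =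
      (∏ j ∈ Finset.Icc 1 s, (X - C (g j t))).coeff k := fun t => by
    rw [← map_evalRingHom_prod_X_sub_C, coeff_map]; rfl
  simp only [hcoeff, hshift]
  congr 1
  exact prod_Icc_add_of_periodic (v := fun j => X - C (g j t)) (fun j => by simp only [hg j]) r

theorem exp_affine_mem_trigPoly (ω φ : ℝ) :
    (fun t : ℝ => exp (I * (ω * t + φ : ℝ))) ∈ trigPoly := by
  have hexpand : (fun t : ℝ => exp (I * (ω * t + φ : ℝ))) = exp (I * φ) • expMode ω := by
    funext t
    simp only [expMode, Pi.smul_apply, smul_eq_mul, ← Complex.exp_add]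
    push_cast
    ring_nf
  rw [hexpand]
  exact Subalgebra.smul_mem _ (expMode_mem_trigPoly ω) _

theorem cos_affine_mem_trigPoly (ω φ : ℝ) :
    (fun t : ℝ => (Real.cos (ω * t + φ) : ℂ)) ∈ trigPoly := by
  have hexpand : (fun t : ℝ => (Real.cos (ω * t + φ) : ℂ)) =
      (2⁻¹ : ℂ) • ((fun t : ℝ => exp (I * (ω * t + φ : ℝ))) +
        fun t : ℝ => exp (I * (-ω * t + -φ : ℝ))) := by
    funext t
    simp only [ofReal_cos, Complex.cos, Pi.smul_apply, Pi.add_apply, smul_eq_mul]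
    push_cast
    ring_nf
  rw [hexpand]
  exact Subalgebra.smul_mem _
    (add_mem (exp_affine_mem_trigPoly _ _) (exp_affine_mem_trigPoly _ _)) _

theorem sin_affine_mem_trigPoly (ω φ : ℝ) :
    (fun t : ℝ => (Real.sin (ω * t + φ) : ℂ)) ∈ trigPoly := by
  have hexpand : (fun t : ℝ => (Real.sin (ω * t + φ) : ℂ)) =
      (I / 2) • ((fun t : ℝ => exp (I * (-ω * t + -φ : ℝ))) -
        fun t : ℝ => exp (I * (ω * t + φ : ℝ))) := by
    funext t
    simp only [ofReal_sin, Complex.sin, Pi.smul_apply, Pi.sub_apply, smul_eq_mul]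
    push_cast
    ring_nf
  rw [hexpand]
  exact Subalgebra.smul_mem _
    (sub_mem (exp_affine_mem_trigPoly _ _) (exp_affine_mem_trigPoly _ _)) _

theorem lemniscateZ_mem_trigPoly (s r ℓ : ℕ) (a b : ℝ) (j : ℕ) :
    lemniscateZ s r ℓ a b j ∈ trigPoly := by
  set φ : ℝ := 2 * π * ((j : ℝ) - 1) / s
  have hexpand : lemniscateZ s r ℓ a b j =
      (a : ℂ) • (fun t : ℝ => (Real.cos (r / s * t + φ) : ℂ)) +
        (I * (b / ℓ : ℝ)) • fun t : ℝ => (Real.sin (ℓ * r / s * t + ℓ * φ) : ℂ) := by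
    funext t
    simp only [lemniscateZ, Pi.add_apply, Pi.smul_apply, smul_eq_mul, φ]
    push_cast
    ring_nf
  rw [hexpand]
  exact add_mem (Subalgebra.smul_mem _ (cos_affine_mem_trigPoly _ _) _)
    (Subalgebra.smul_mem _ (sin_affine_mem_trigPoly _ _) _)

theorem lemniscateZ_add_two_pi (s r ℓ : ℕ) (a b : ℝ) (j : ℕ) (h : ℝ) :
    lemniscateZ s r ℓ a b j (h + 2 * π) = lemniscateZ s r ℓ a b (j + r) h := by
  simp only [lemniscateZ]
  push_cast
  ring_nf

theorem lemniscateZ_periodic (s r ℓ : ℕ) (a b : ℝ) : Periodic (lemniscateZ s r ℓ a b) s := by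
  intro j
  rcases eq_or_ne s 0 with rfl | hs
  · rfl
  funext h
  have hs' : (s : ℝ) ≠ 0 := Nat.cast_ne_zero.mpr hs
  have hcos : (r * h + 2 * π * (((j + s : ℕ) : ℝ) - 1)) / s =
      (r * h + 2 * π * ((j : ℝ) - 1)) / s + 2 * π := by
    push_cast; field_simp; ring
  have hsin : ℓ * (r * h + 2 * π * (((j + s : ℕ) : ℝ) - 1)) / s =
      ℓ * (r * h + 2 * π * ((j : ℝ) - 1)) / s + (ℓ : ℤ) * (2 * π) := by
    push_cast; field_simp; ring
  rw [lemniscateZ, lemniscateZ, hcos, hsin, Real.cos_add_two_pi, Real.sin_add_int_mul_two_pi]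

end RotatingLemniscate

open RotatingLemniscate

theorem rotating_lemniscate_braid_polynomial_general (s r ℓ : ℕ) (a b : ℝ) (n : ℤ) :
    ∃ F : MvPolynomial (Fin 3) ℂ,
      ∀ (u : ℂ) (h : ℝ),
        MvPolynomial.eval
            ![u, Complex.exp (Complex.I * h), Complex.exp (-(Complex.I * h))] F =
          ∏ j ∈ Finset.Icc 1 s,
            (u - Complex.exp (Complex.I * (n * h : ℝ)) * lemniscateZ s r ℓ a b j h) := by
  set g : ℕ → ℝ → ℂ := fun j => expMode n * lemniscateZ s r ℓ a b j
  obtain ⟨F, hF⟩ := exists_eval_eq_of_coeff_periodic (∏ j ∈ Finset.Icc 1 s, (X - C (g j)))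
    (coeff_prod_X_sub_C_mem trigPoly.toSubring _
      fun j => mul_mem (expMode_mem_trigPoly n) (lemniscateZ_mem_trigPoly s r ℓ a b j))
    (coeff_prod_X_sub_C_periodic (r := r)
      (fun j => by simp only [g, lemniscateZ_periodic s r ℓ a b j])
      fun j t => by
        simp only [g, Pi.mul_apply, expMode_intCast_periodic n t, lemniscateZ_add_two_pi])
  refine ⟨F, fun u h => ?_⟩
  rw [hF, map_evalRingHom_prod_X_sub_C, eval_prod]
  simp [g, expMode]

/-- The braid polynomial of the rotating lemniscate braid, whose strands are
`e^{inh}·Z_j(h)`, is again a polynomial in `u`, `e^{ih}` and `e^{−ih}`. -/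
theorem rotating_lemniscate_braid_polynomial (s r ℓ : ℕ) (hs : 0 < s) (hr : 0 < r)
    (hℓ : 0 < ℓ) (a b : ℝ) (n : ℤ) :
    ∃ F : MvPolynomial (Fin 3) ℂ,
      ∀ (u : ℂ) (h : ℝ),
        MvPolynomial.eval
            ![u, Complex.exp (Complex.I * h), Complex.exp (-(Complex.I * h))] F =
          ∏ j ∈ Finset.Icc 1 s,
            (u - Complex.exp (Complex.I * (n * h : ℝ)) * lemniscateZ s r ℓ a b j h) :=
  rotating_lemniscate_braid_polynomial_general s r ℓ a b n
end
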